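/- arXiv:2408.16591 — 7 statements merged into one kernel-verified Lean document; each statement's English description precedes it below -/
import Mathlib

section
/- Let V be an n×s real matrix with rank(V) ≤ r. Let p be an injective tuple of r row indices and q an injective tuple of r column indices such that the r×r intersection submatrix V(p,q) is invertible. Then V admits the exact skeleton (CUR) decomposition V = V(:,q) · V(p,q)⁻¹ · V(p,:). -/
open Matrix

/-!
The columns `V(:, q)` have rank `r`, since their rows `p` form the invertible block `V(p, q)`;
as `rank V ≤ r`, they span the column space of `V`, so `V = V(:, q) * B` for some `B`.
Restricting to the rows `p` gives `V(p, :) = V(p, q) * B`, i.e. `B = V(p, q)⁻¹ * V(p, :)`.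
-/

namespace Matrix

variable {m n k K R : Type*} [Fintype k]

theorem range_mulVecLin_submatrix_id_le [Fintype n] [CommSemiring R] (V : Matrix m n R)
    (q : k → n) :
    LinearMap.range (V.submatrix id q).mulVecLin ≤ LinearMap.range V.mulVecLin := by
  simp only [range_mulVecLin]
  exact Submodule.span_mono (Set.range_comp_subset_range q V.col)

theorem range_mulVecLin_submatrix_id_eq_of_rank_le [Fintype n] [Field K] (V : Matrix m n K)
    (q : k → n) (h : V.rank ≤ (V.submatrix id q).rank) :
    LinearMap.range (V.submatrix id q).mulVecLin = LinearMap.range V.mulVecLin :=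
  Submodule.eq_of_le_of_finrank_le (range_mulVecLin_submatrix_id_le V q) h

theorem exists_eq_mul_of_range_mulVecLin_le [Fintype n] [CommSemiring R] {V : Matrix m n R}
    {C : Matrix m k R} (h : LinearMap.range V.mulVecLin ≤ LinearMap.range C.mulVecLin) :
    ∃ B, V = C * B := by
  classical
  have hcol (j : n) : ∃ b, C *ᵥ b = V.col j := by
    obtain ⟨b, hb⟩ := h (LinearMap.mem_range_self V.mulVecLin (Pi.single j 1))
    exact ⟨b, by simpa [mulVec_single_one] using hb⟩
  choose b hb using hcol
  refine ⟨(of b)ᵀ, ?_⟩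
  ext i j
  exact (congrFun (hb j) i).symm

theorem eq_mul_nonsing_inv_submatrix_mul_of_eq_mul [CommRing R] [DecidableEq k]
    {V : Matrix m n R} {C : Matrix m k R} {B : Matrix k n R} (hV : V = C * B) (p : k → m)
    (hC : IsUnit (C.submatrix p id).det) :
    V = C * (C.submatrix p id)⁻¹ * V.submatrix p id := by
  have hrows : V.submatrix p id = C.submatrix p id * B := by
    rw [hV, submatrix_mul _ _ _ _ _ Function.bijective_id, submatrix_id_id]
  rw [hrows, Matrix.mul_assoc, nonsing_inv_mul_cancel_left _ _ hC, hV]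

end Matrix

theorem cur_exact_skeleton_decomposition_general {n s r : ℕ}
    (V : Matrix (Fin n) (Fin s) ℝ)
    (p : Fin r → Fin n) (q : Fin r → Fin s)
    (hrank : V.rank ≤ r)
    (hinv : IsUnit (V.submatrix p q).det) :
    V = V.submatrix id q * (V.submatrix p q)⁻¹ * V.submatrix p id := by
  have hcore : (V.submatrix p q).rank = r := by
    simpa using rank_of_isUnit _ ((isUnit_iff_isUnit_det _).mpr hinv)
  have hcols : r ≤ (V.submatrix id q).rank := by
    simpa [hcore] using rank_submatrix_le (V.submatrix id q) p id
  obtain ⟨B, hB⟩ := exists_eq_mul_of_range_mulVecLin_le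
    (range_mulVecLin_submatrix_id_eq_of_rank_le V q (hrank.trans hcols)).ge
  exact eq_mul_nonsing_inv_submatrix_mul_of_eq_mul hB p hinv

/-- **Exact skeleton (CUR) decomposition.** If an `n × s` real matrix `V` has rank at most `r`,
and `p`, `q` are injective tuples of `r` row and column indices such that the `r × r`
intersection submatrix `V(p, q)` is invertible, then
`V = V(:, q) · V(p, q)⁻¹ · V(p, :)`. -/
theorem cur_exact_skeleton_decomposition {n s r : ℕ}
    (V : Matrix (Fin n) (Fin s) ℝ)
    (p : Fin r → Fin n) (q : Fin r → Fin s)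
    (hp : Function.Injective p) (hq : Function.Injective q)
    (hrank : V.rank ≤ r)
    (hinv : IsUnit (V.submatrix p q).det) :
    V = V.submatrix id q * (V.submatrix p q)⁻¹ * V.submatrix p id :=
  cur_exact_skeleton_decomposition_general V p q hrank hinv
end

section
/- Let V be an n×s real matrix, q an injective tuple of r column indices, and p an injective tuple of r row indices. Suppose V(:,q) = Q·R where Q is an n×r real matrix and R is an invertible r×r real matrix, and suppose the r×r submatrix Q(p,:) is invertible. Then the intersection submatrix V(p,q) is invertible and the stable CUR formula agrees with the CUR formula: Q · (Q(p,:))⁻¹ · V(p,:) = V(:,q) · V(p,q)⁻¹ · V(p,:). -/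
open Matrix

namespace Matrix

variable {α : Type*} {k l m n o : Type*}

theorem submatrix_eq_submatrix_mul_of_submatrix_id_eq_mul [NonUnitalNonAssocSemiring α]
    [Fintype l] (V : Matrix m n α) (p : k → m) (q : o → n) (Q : Matrix m l α)
    (R : Matrix l o α) (hQR : V.submatrix id q = Q * R) :
    V.submatrix p q = Q.submatrix p id * R := by
  rw [← submatrix_id_id R, ← submatrix_mul _ _ _ _ _ Function.bijective_id, ← hQR,
    submatrix_submatrix]
  rfl

theorem mul_mul_mul_inv_cancel_right [CommRing α] [Fintype l] [DecidableEq l]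
    (Q : Matrix m l α) (P R : Matrix l l α) (hR : IsUnit R.det) :
    Q * R * (P * R)⁻¹ = Q * P⁻¹ := by
  rw [mul_inv_rev, Matrix.mul_assoc, ← Matrix.mul_assoc R, mul_nonsing_inv R hR,
    Matrix.one_mul]

end Matrix

theorem stable_cur_eq_cur_general {n s r : ℕ}
    (V : Matrix (Fin n) (Fin s) ℝ)
    (q : Fin r → Fin s) (p : Fin r → Fin n)
    (Q : Matrix (Fin n) (Fin r) ℝ) (R : Matrix (Fin r) (Fin r) ℝ)
    (hQR : V.submatrix id q = Q * R) (hR : IsUnit R.det)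
    (hQp : IsUnit (Q.submatrix p id).det) :
    IsUnit (V.submatrix p q).det ∧
      Q * (Q.submatrix p id)⁻¹ * V.submatrix p id =
        V.submatrix id q * (V.submatrix p q)⁻¹ * V.submatrix p id := by
  have hpq : V.submatrix p q = Q.submatrix p id * R :=
    submatrix_eq_submatrix_mul_of_submatrix_id_eq_mul V p q Q R hQR
  refine ⟨?_, ?_⟩
  · rw [hpq, det_mul]
    exact hQp.mul hR
  · rw [hpq, hQR, mul_mul_mul_inv_cancel_right Q _ R hR]

/-- **Stable CUR agrees with CUR.** If `V(:, q) = Q · R` with `R` invertible and the `r × r`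
row-submatrix `Q(p, :)` invertible, then the intersection submatrix `V(p, q)` is invertible and
`Q · (Q(p, :))⁻¹ · V(p, :) = V(:, q) · V(p, q)⁻¹ · V(p, :)`. -/
theorem stable_cur_eq_cur {n s r : ℕ}
    (V : Matrix (Fin n) (Fin s) ℝ)
    (q : Fin r → Fin s) (p : Fin r → Fin n)
    (hq : Function.Injective q) (hp : Function.Injective p)
    (Q : Matrix (Fin n) (Fin r) ℝ) (R : Matrix (Fin r) (Fin r) ℝ)
    (hQR : V.submatrix id q = Q * R) (hR : IsUnit R.det)
    (hQp : IsUnit (Q.submatrix p id).det) :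
    IsUnit (V.submatrix p q).det ∧
      Q * (Q.submatrix p id)⁻¹ * V.submatrix p id =
        V.submatrix id q * (V.submatrix p q)⁻¹ * V.submatrix p id :=
  stable_cur_eq_cur_general V q p Q R hQR hR hQp
end

section
/- Let V be an n×s real matrix and q an injective tuple of r column indices with V(:,q) = Q·R, where Q is an n×r real matrix and R is an invertible r×r real matrix. Let p be an injective tuple of m ≥ r row indices (row oversampling) such that the r×r matrix Q(p,:)ᵀ·Q(p,:) is invertible. Define the oversampled CUR approximation V̂ = Q · (Q(p,:)ᵀ·Q(p,:))⁻¹ · Q(p,:)ᵀ · V(p,:), i.e. V̂ = Q · Q(p,:)† · V(p,:) with the Moore–Penrose formula A† = (AᵀA)⁻¹Aᵀ. Then V̂ exactly reproduces the selected columns: V̂(:,q) = V(:,q). -/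
/-!
`V(:, q) = Q R` lies in the column space of `Q`, and `X ↦ Q · Q(p, :)† · X(p, :)` fixes every
matrix `Q R` because `Q(p, :)† · Q(p, :) = 1`.
-/

open Matrix

namespace Matrix

variable {k m n r α : Type*} [Fintype m] [Fintype r] [DecidableEq r] [CommRing α]

/-- The Moore–Penrose inverse `A†` when `A` has full column rank; otherwise `(AᵀA)⁻¹` is the
junk value `0`. -/
noncomputable def leftPinv (A : Matrix m r α) : Matrix r m α :=
  (Aᵀ * A)⁻¹ * Aᵀ

theorem leftPinv_mul_self {A : Matrix m r α} (hA : IsUnit (Aᵀ * A).det) :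
    A.leftPinv * A = 1 := by
  rw [leftPinv, Matrix.mul_assoc, nonsing_inv_mul _ hA]

theorem mul_leftPinv_submatrix_mul_submatrix_of_eq_mul {Q : Matrix n r α} {p : m → n}
    (hQ : IsUnit ((Q.submatrix p id)ᵀ * Q.submatrix p id).det) {W : Matrix n k α}
    (R : Matrix r k α) (hW : W = Q * R) :
    Q * (Q.submatrix p id).leftPinv * W.submatrix p id = W := by
  rw [hW, submatrix_mul Q R p id id Function.bijective_id, submatrix_id_id, Matrix.mul_assoc,
    ← Matrix.mul_assoc _ _ R, leftPinv_mul_self hQ, Matrix.one_mul]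

end Matrix

theorem oversampled_cur_reproduces_columns_general {n s r m : ℕ}
    (V : Matrix (Fin n) (Fin s) ℝ)
    (q : Fin r → Fin s)
    (Q : Matrix (Fin n) (Fin r) ℝ) (R : Matrix (Fin r) (Fin r) ℝ)
    (hQR : V.submatrix id q = Q * R)
    (p : Fin m → Fin n)
    (hGram : IsUnit ((Q.submatrix p id)ᵀ * Q.submatrix p id).det)
    (Vhat : Matrix (Fin n) (Fin s) ℝ)
    (hVhat : Vhat =
      Q * ((Q.submatrix p id)ᵀ * Q.submatrix p id)⁻¹ * (Q.submatrix p id)ᵀ *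
        V.submatrix p id) :
    Vhat.submatrix id q = V.submatrix id q :=
  calc Vhat.submatrix id q
      = Q * (Q.submatrix p id).leftPinv * (V.submatrix id q).submatrix p id := by
        rw [hVhat, leftPinv, ← Matrix.mul_assoc,
          submatrix_mul _ _ id id q Function.bijective_id, submatrix_id_id]
        rfl
    _ = V.submatrix id q := mul_leftPinv_submatrix_mul_submatrix_of_eq_mul hGram R hQR

/-- **Oversampled CUR reproduces the selected columns.** Suppose `V(:, q) = Q · R` with `R`
invertible, and let `p` be an injective tuple of `m ≥ r` row indices such that the Gram matrix
`Q(p, :)ᵀ · Q(p, :)` is invertible. Then the oversampled CUR approximation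
`V̂ = Q · (Q(p, :)ᵀ · Q(p, :))⁻¹ · Q(p, :)ᵀ · V(p, :)` (i.e. `V̂ = Q · Q(p, :)† · V(p, :)`)
satisfies `V̂(:, q) = V(:, q)`. -/
theorem oversampled_cur_reproduces_columns {n s r m : ℕ}
    (V : Matrix (Fin n) (Fin s) ℝ)
    (q : Fin r → Fin s) (hq : Function.Injective q)
    (Q : Matrix (Fin n) (Fin r) ℝ) (R : Matrix (Fin r) (Fin r) ℝ)
    (hQR : V.submatrix id q = Q * R) (hR : IsUnit R.det)
    (p : Fin m → Fin n) (hp : Function.Injective p) (hm : r ≤ m)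
    (hGram : IsUnit ((Q.submatrix p id)ᵀ * Q.submatrix p id).det)
    (Vhat : Matrix (Fin n) (Fin s) ℝ)
    (hVhat : Vhat =
      Q * ((Q.submatrix p id)ᵀ * Q.submatrix p id)⁻¹ * (Q.submatrix p id)ᵀ *
        V.submatrix p id) :
    Vhat.submatrix id q = V.submatrix id q :=
  oversampled_cur_reproduces_columns_general V q Q R hQR p hGram Vhat hVhat
end

section
/- Let U be an n×r real matrix and Y an s×r real matrix with orthonormal columns (UᵀU = I_r, YᵀY = I_r), let Σ be an invertible r×r real matrix, and let F be an arbitrary n×s real matrix. Define the DLRA velocities Σ̇ = Uᵀ·F·Y, U̇ = (I_n − U·Uᵀ)·F·Y·Σ⁻¹, and Ẏ = (I_s − Y·Yᵀ)·Fᵀ·U·(Σᵀ)⁻¹. Then the induced velocity of the low-rank factorization equals the orthogonal projection of F onto the tangent space of the rank-r manifold at U·Σ·Yᵀ: U̇·Σ·Yᵀ + U·Σ̇·Yᵀ + U·Σ·Ẏᵀ = U·Uᵀ·F + F·Y·Yᵀ − U·Uᵀ·F·Y·Yᵀ. -/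
/-! With `P = U Uᵀ` and `Q = Y Yᵀ`, the factor `S` cancels against `S⁻¹` in the `U̇` and `Ẏ`
terms, and the three terms of the velocity become `(1 - P) F Q`, `P F Q` and `P F (1 - Q)`. -/

open Matrix

namespace Matrix

variable {k m n r R : Type*} [CommRing R]

theorem mul_mul_transpose_mul_transpose_nonsing_inv [Fintype r] [DecidableEq r]
    (U : Matrix m r R) (S : Matrix r r R) (A : Matrix k r R) (hS : IsUnit S.det) :
    U * S * (A * Sᵀ⁻¹)ᵀ = U * Aᵀ := by
  rw [transpose_mul, ← transpose_nonsing_inv, transpose_transpose, Matrix.mul_assoc,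
    mul_nonsing_inv_cancel_left _ _ hS]

theorem one_sub_mul_mul_add_mul_mul_add_mul_mul_one_sub [Fintype m] [Fintype n] [DecidableEq m]
    [DecidableEq n] (P : Matrix m m R) (F : Matrix m n R) (Q : Matrix n n R) :
    (1 - P) * F * Q + P * F * Q + P * F * (1 - Q) = P * F + F * Q - P * F * Q := by
  simp only [Matrix.sub_mul, Matrix.mul_sub, Matrix.one_mul, Matrix.mul_one]
  abel

end Matrix

theorem dlra_velocity_eq_tangent_projection_general {n s r : ℕ}
    (U : Matrix (Fin n) (Fin r) ℝ) (Y : Matrix (Fin s) (Fin r) ℝ)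
    (S : Matrix (Fin r) (Fin r) ℝ) (F : Matrix (Fin n) (Fin s) ℝ)
    (hS : IsUnit S.det)
    (Sdot : Matrix (Fin r) (Fin r) ℝ)
    (Udot : Matrix (Fin n) (Fin r) ℝ)
    (Ydot : Matrix (Fin s) (Fin r) ℝ)
    (hSdot : Sdot = Uᵀ * F * Y)
    (hUdot : Udot = (1 - U * Uᵀ) * F * Y * S⁻¹)
    (hYdot : Ydot = (1 - Y * Yᵀ) * Fᵀ * U * (Sᵀ)⁻¹) :
    Udot * S * Yᵀ + U * Sdot * Yᵀ + U * S * Ydotᵀ =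
      U * Uᵀ * F + F * Y * Yᵀ - U * Uᵀ * F * Y * Yᵀ := by
  subst hSdot hUdot hYdot
  rw [nonsing_inv_mul_cancel_right _ _ hS, mul_mul_transpose_mul_transpose_nonsing_inv _ _ _ hS]
  simpa only [transpose_mul, transpose_sub, transpose_one, transpose_transpose, Matrix.mul_assoc]
    using one_sub_mul_mul_add_mul_mul_add_mul_mul_one_sub (U * Uᵀ) F (Y * Yᵀ)

/-- **DLRA velocity is the tangent-space projection.** Let `U` (`n × r`) and `Y` (`s × r`) have
orthonormal columns, let `S` (`r × r`) be invertible, and let `F` be any `n × s` real matrix.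
With `Ṡ = Uᵀ·F·Y`, `U̇ = (I − U·Uᵀ)·F·Y·S⁻¹`, `Ẏ = (I − Y·Yᵀ)·Fᵀ·U·(Sᵀ)⁻¹`, one has
`U̇·S·Yᵀ + U·Ṡ·Yᵀ + U·S·Ẏᵀ = U·Uᵀ·F + F·Y·Yᵀ − U·Uᵀ·F·Y·Yᵀ`, the orthogonal projection of `F`
onto the tangent space of the rank-`r` manifold at `U·S·Yᵀ`. -/
theorem dlra_velocity_eq_tangent_projection {n s r : ℕ}
    (U : Matrix (Fin n) (Fin r) ℝ) (Y : Matrix (Fin s) (Fin r) ℝ)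
    (S : Matrix (Fin r) (Fin r) ℝ) (F : Matrix (Fin n) (Fin s) ℝ)
    (hU : Uᵀ * U = 1) (hY : Yᵀ * Y = 1) (hS : IsUnit S.det)
    (Sdot : Matrix (Fin r) (Fin r) ℝ)
    (Udot : Matrix (Fin n) (Fin r) ℝ)
    (Ydot : Matrix (Fin s) (Fin r) ℝ)
    (hSdot : Sdot = Uᵀ * F * Y)
    (hUdot : Udot = (1 - U * Uᵀ) * F * Y * S⁻¹)
    (hYdot : Ydot = (1 - Y * Yᵀ) * Fᵀ * U * (Sᵀ)⁻¹) :
    Udot * S * Yᵀ + U * Sdot * Yᵀ + U * S * Ydotᵀ =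
      U * Uᵀ * F + F * Y * Yᵀ - U * Uᵀ * F * Y * Yᵀ :=
  dlra_velocity_eq_tangent_projection_general U Y S F hS Sdot Udot Ydot hSdot hUdot hYdot
end

section
/- Let U be an n×r real matrix and Y an s×r real matrix with orthonormal columns (UᵀU = I_r, YᵀY = I_r), let Σ be an invertible r×r real matrix, and let F be an arbitrary n×s real matrix. Define Σ̇ = Uᵀ·F·Y, U̇ = (I_n − U·Uᵀ)·F·Y·Σ⁻¹, and Ẏ = (I_s − Y·Yᵀ)·Fᵀ·U·(Σᵀ)⁻¹. Then for every A ∈ ℝ^{n×r} with Uᵀ·A = 0, every B ∈ ℝ^{r×r}, and every C ∈ ℝ^{s×r} with Yᵀ·C = 0, the Frobenius-norm residual is minimized by the DLRA choice: ‖U̇·Σ·Yᵀ + U·Σ̇·Yᵀ + U·Σ·Ẏᵀ − F‖_F ≤ ‖A·Σ·Yᵀ + U·B·Yᵀ + U·Σ·Cᵀ − F‖_F. -/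
/-!
With `P = U Uᵀ` and `Q = Y Yᵀ`, every tangent direction `Z` satisfies `(1 - P) Z (1 - Q) = 0`,
and the DLRA velocity is `P F + F Q - P F Q`, whose residual is `-(1 - P) F (1 - Q)`.
Compressing by the orthogonal projections `1 - P` and `1 - Q` cannot increase the Frobenius norm,
so `‖(1 - P) F (1 - Q)‖ = ‖(1 - P) (F - Z) (1 - Q)‖ ≤ ‖F - Z‖`.
-/

open Matrix

attribute [local instance] Matrix.frobeniusNormedAddCommGroup

namespace Matrix

theorem frobenius_norm_sq_eq_trace {m n : Type*} [Fintype m] [Fintype n] (A : Matrix m n ℝ) :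
    ‖A‖ ^ 2 = trace (Aᵀ * A) := by
  rw [frobenius_norm_def, ← Real.rpow_natCast, ← Real.rpow_mul (by positivity)]
  norm_num [trace, mul_apply, Finset.sum_comm (γ := m), sq]

namespace IsStarProjection

variable {m n : Type*} [Fintype m] {P : Matrix m m ℝ}

theorem transpose_eq (hP : IsStarProjection P) : Pᵀ = P := by
  simpa [star_eq_conjTranspose] using hP.isSelfAdjoint.star_eq

theorem transpose_mul_mul_self (hP : IsStarProjection P) (A : Matrix m n ℝ) :
    (P * A)ᵀ * (P * A) = Aᵀ * P * A := by
  rw [transpose_mul, hP.transpose_eq, Matrix.mul_assoc, ← Matrix.mul_assoc P,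
    hP.isIdempotentElem.eq, Matrix.mul_assoc]

theorem frobenius_norm_sq_add [DecidableEq m] [Fintype n] (hP : IsStarProjection P)
    (A : Matrix m n ℝ) :
    ‖P * A‖ ^ 2 + ‖(1 - P) * A‖ ^ 2 = ‖A‖ ^ 2 := by
  simp only [frobenius_norm_sq_eq_trace, hP.transpose_mul_mul_self,
    hP.one_sub.transpose_mul_mul_self, ← trace_add, ← Matrix.add_mul, ← Matrix.mul_add,
    add_sub_cancel, Matrix.mul_one]

theorem frobenius_norm_mul_le [DecidableEq m] [Fintype n] (hP : IsStarProjection P)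
    (A : Matrix m n ℝ) : ‖P * A‖ ≤ ‖A‖ := by
  have := hP.frobenius_norm_sq_add A
  nlinarith [norm_nonneg (P * A), norm_nonneg A, norm_nonneg ((1 - P) * A)]

theorem frobenius_norm_mul_mul_le [DecidableEq m] [Fintype n] [DecidableEq n] {Q : Matrix n n ℝ}
    (hP : IsStarProjection P) (hQ : IsStarProjection Q) (A : Matrix m n ℝ) :
    ‖P * A * Q‖ ≤ ‖A‖ :=
  calc ‖P * A * Q‖ = ‖Q * (P * A)ᵀ‖ := by
        rw [← frobenius_norm_transpose, transpose_mul, hQ.transpose_eq]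
    _ ≤ ‖(P * A)ᵀ‖ := hQ.frobenius_norm_mul_le _
    _ = ‖P * A‖ := frobenius_norm_transpose _
    _ ≤ ‖A‖ := hP.frobenius_norm_mul_le A

end IsStarProjection

variable {m k : Type*} [Fintype m] [Fintype k] [DecidableEq k]
  {V : Matrix m k ℝ}

theorem isStarProjection_mul_transpose_self (hV : Vᵀ * V = 1) : IsStarProjection (V * Vᵀ) where
  isIdempotentElem := by
    rw [IsIdempotentElem, Matrix.mul_assoc, ← Matrix.mul_assoc Vᵀ, hV, Matrix.one_mul]
  isSelfAdjoint := by
    rw [IsSelfAdjoint, star_eq_conjTranspose, conjTranspose_eq_transpose_of_trivial,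
      transpose_mul, transpose_transpose]

theorem one_sub_mul_transpose_self_mul [DecidableEq m] (hV : Vᵀ * V = 1) :
    (1 - V * Vᵀ) * V = 0 := by
  rw [Matrix.sub_mul, Matrix.mul_assoc, hV, Matrix.one_mul, Matrix.mul_one, sub_self]

theorem transpose_mul_one_sub_mul_transpose_self [DecidableEq m] (hV : Vᵀ * V = 1) :
    Vᵀ * (1 - V * Vᵀ) = 0 := by
  rw [Matrix.mul_sub, ← Matrix.mul_assoc, hV, Matrix.one_mul, Matrix.mul_one, sub_self]

end Matrix

section DLRA

variable {m l k : Type*} [Fintype m] [DecidableEq m] [Fintype l] [DecidableEq l]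
  [Fintype k] [DecidableEq k] {U : Matrix m k ℝ} {Y : Matrix l k ℝ} {S : Matrix k k ℝ}

theorem dlra_residual_eq (hS : IsUnit S.det) (F : Matrix m l ℝ) :
    (1 - U * Uᵀ) * F * Y * S⁻¹ * S * Yᵀ + U * (Uᵀ * F * Y) * Yᵀ +
        U * S * ((1 - Y * Yᵀ) * Fᵀ * U * (Sᵀ)⁻¹)ᵀ - F =
      -((1 - U * Uᵀ) * F * (1 - Y * Yᵀ)) := by
  simp only [transpose_mul, transpose_sub, transpose_transpose, transpose_nonsing_inv,
    Matrix.mul_assoc, nonsing_inv_mul S hS, mul_nonsing_inv_cancel_left S _ hS, Matrix.mul_one,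
    Matrix.sub_mul, Matrix.mul_sub, Matrix.one_mul]
  abel

theorem one_sub_mul_tangent_mul_one_sub_eq_zero (hU : Uᵀ * U = 1) (hY : Yᵀ * Y = 1)
    (A : Matrix m k ℝ) (B : Matrix k k ℝ) (C : Matrix l k ℝ) :
    (1 - U * Uᵀ) * (A * S * Yᵀ + U * B * Yᵀ + U * S * Cᵀ) * (1 - Y * Yᵀ) = 0 := by
  simp only [Matrix.mul_add, ← Matrix.mul_assoc, one_sub_mul_transpose_self_mul hU,
    Matrix.zero_mul, add_zero, Matrix.mul_assoc _ Yᵀ,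
    transpose_mul_one_sub_mul_transpose_self hY, Matrix.mul_zero]

end DLRA

/-- **DLRA minimizes the Frobenius-norm residual over the tangent space.** Let `U` (`n × r`) and
`Y` (`s × r`) have orthonormal columns, `S` (`r × r`) invertible, and `F` any `n × s` real
matrix. With the DLRA velocities `Ṡ = Uᵀ·F·Y`, `U̇ = (I − U·Uᵀ)·F·Y·S⁻¹`,
`Ẏ = (I − Y·Yᵀ)·Fᵀ·U·(Sᵀ)⁻¹`, for every tangent direction `A·S·Yᵀ + U·B·Yᵀ + U·S·Cᵀ` with
`UᵀA = 0` and `YᵀC = 0` one has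
`‖U̇·S·Yᵀ + U·Ṡ·Yᵀ + U·S·Ẏᵀ − F‖_F ≤ ‖A·S·Yᵀ + U·B·Yᵀ + U·S·Cᵀ − F‖_F`. -/
theorem dlra_minimizes_frobenius_residual {n s r : ℕ}
    (U : Matrix (Fin n) (Fin r) ℝ) (Y : Matrix (Fin s) (Fin r) ℝ)
    (S : Matrix (Fin r) (Fin r) ℝ) (F : Matrix (Fin n) (Fin s) ℝ)
    (hU : Uᵀ * U = 1) (hY : Yᵀ * Y = 1) (hS : IsUnit S.det)
    (Sdot : Matrix (Fin r) (Fin r) ℝ)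
    (Udot : Matrix (Fin n) (Fin r) ℝ)
    (Ydot : Matrix (Fin s) (Fin r) ℝ)
    (hSdot : Sdot = Uᵀ * F * Y)
    (hUdot : Udot = (1 - U * Uᵀ) * F * Y * S⁻¹)
    (hYdot : Ydot = (1 - Y * Yᵀ) * Fᵀ * U * (Sᵀ)⁻¹) :
    ∀ (A : Matrix (Fin n) (Fin r) ℝ) (B : Matrix (Fin r) (Fin r) ℝ)
      (C : Matrix (Fin s) (Fin r) ℝ), Uᵀ * A = 0 → Yᵀ * C = 0 →
      ‖Udot * S * Yᵀ + U * Sdot * Yᵀ + U * S * Ydotᵀ - F‖ ≤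
        ‖A * S * Yᵀ + U * B * Yᵀ + U * S * Cᵀ - F‖ := by
  intro A B C _ _
  subst hSdot hUdot hYdot
  have hP := (isStarProjection_mul_transpose_self hU).one_sub
  have hQ := (isStarProjection_mul_transpose_self hY).one_sub
  rw [dlra_residual_eq hS, norm_neg, norm_sub_rev]
  calc ‖(1 - U * Uᵀ) * F * (1 - Y * Yᵀ)‖
      = ‖(1 - U * Uᵀ) * (F - (A * S * Yᵀ + U * B * Yᵀ + U * S * Cᵀ)) *
          (1 - Y * Yᵀ)‖ := by
        rw [Matrix.mul_sub (1 - U * Uᵀ) F, Matrix.sub_mul _ _ (1 - Y * Yᵀ),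
          one_sub_mul_tangent_mul_one_sub_eq_zero hU hY, sub_zero]
    _ ≤ _ := hP.frobenius_norm_mul_mul_le hQ _
end

section
/- Let V be an n×s real matrix with singular value decomposition V = U_f·Σ·Y_fᵀ, where U_f is an n×n orthogonal matrix, Y_f is an s×s orthogonal matrix, and Σ is an n×s matrix whose off-diagonal entries vanish and whose diagonal entries σ₁ ≥ σ₂ ≥ … ≥ 0 are nonincreasing and nonnegative. For r ≤ min(n,s), let V_r = U_f·Σ_r·Y_fᵀ denote the rank-r truncated SVD, where Σ_r agrees with Σ in its first r diagonal entries and is zero elsewhere. Then V_r is an optimal rank-r approximation in the Frobenius norm: for every n×s real matrix B with rank(B) ≤ r, ‖V − V_r‖_F ≤ ‖V − B‖_F. -/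
/-!
Orthogonal invariance of the Frobenius norm reduces the claim to `V = S`, with `B` replaced by
`C = Ufᵀ * B * Yf`, which still has rank at most `r`. Row `i` of `S` is `σᵢ eᵢ`. Let `P` be the
orthogonal projection onto the row space of `C`. The rows of `C` lie in the range of `P`, so
`‖S - C‖² ≥ ∑ᵢ (‖σᵢ eᵢ‖² - ‖P (σᵢ eᵢ)‖²) = ∑ᵢ σᵢ² (1 - pᵢ)` with `pᵢ = ‖P eᵢ‖² ∈ [0, 1]` and
`∑ᵢ pᵢ ≤ tr P = rank C ≤ r`. For nonincreasing `σᵢ² ≥ 0` such weights satisfy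
`∑ᵢ σᵢ² pᵢ ≤ ∑_{i<r} σᵢ²`, hence `‖S - C‖² ≥ ∑_{i≥r} σᵢ² = ‖S - S_r‖²`.
-/

open Matrix

attribute [local instance] Matrix.frobeniusNormedAddCommGroup

open Finset Module WithLp

theorem sum_range_mul_le_sum_range_of_antitone {g p : ℕ → ℝ} {m r : ℕ} (hrm : r ≤ m)
    (hg : Antitone g) (hgr : 0 ≤ g r) (hp₀ : ∀ i, 0 ≤ p i) (hp₁ : ∀ i, p i ≤ 1)
    (hp : ∑ i ∈ range m, p i ≤ r) :
    ∑ i ∈ range m, g i * p i ≤ ∑ i ∈ range r, g i := by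
  have hhead : ∀ i ∈ range r, g i * p i ≤ g i - g r * (1 - p i) := fun i hi => by
    nlinarith [hg (mem_range.mp hi).le, hp₁ i]
  have htail : ∀ i ∈ Ico r m, g i * p i ≤ g r * p i := fun i hi =>
    mul_le_mul_of_nonneg_right (hg (mem_Ico.mp hi).1) (hp₀ i)
  have hsplit := sum_range_add_sum_Ico p hrm
  calc ∑ i ∈ range m, g i * p i
      = ∑ i ∈ range r, g i * p i + ∑ i ∈ Ico r m, g i * p i := (sum_range_add_sum_Ico _ hrm).symm
    _ ≤ ∑ i ∈ range r, (g i - g r * (1 - p i)) + ∑ i ∈ Ico r m, g r * p i :=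
        add_le_add (sum_le_sum hhead) (sum_le_sum htail)
    _ = ∑ i ∈ range r, g i - g r * (r - ∑ i ∈ range m, p i) := by
        simp only [sum_sub_distrib, ← mul_sum, sum_const, card_range, nsmul_eq_mul, ← hsplit]
        ring
    _ ≤ ∑ i ∈ range r, g i := by
        have := mul_nonneg hgr (sub_nonneg.mpr hp)
        linarith

namespace Submodule

variable {𝕜 E : Type*} [RCLike 𝕜] [NormedAddCommGroup E] [InnerProductSpace 𝕜 E]

theorem norm_sub_starProjection_le (K : Submodule 𝕜 E) [K.HasOrthogonalProjection] (x : E)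
    {y : E} (hy : y ∈ K) : ‖x - K.starProjection x‖ ≤ ‖x - y‖ := by
  rw [starProjection_minimal]
  exact ciInf_le ⟨0, by rintro _ ⟨z, rfl⟩; exact norm_nonneg _⟩ (⟨y, hy⟩ : K)

theorem norm_sq_sub_norm_starProjection_sq_le (K : Submodule 𝕜 E) [K.HasOrthogonalProjection]
    (x : E) {y : E} (hy : y ∈ K) : ‖x‖ ^ 2 - ‖K.starProjection x‖ ^ 2 ≤ ‖x - y‖ ^ 2 := by
  rw [K.norm_sq_eq_add_norm_sq_starProjection x, starProjection_orthogonal_val, add_sub_cancel_left]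
  gcongr
  exact K.norm_sub_starProjection_le x hy

theorem sum_norm_starProjection_sq_eq_finrank [FiniteDimensional 𝕜 E] {ι : Type*} [Fintype ι]
    (K : Submodule 𝕜 E) (b : OrthonormalBasis ι 𝕜 E) :
    ∑ i, ‖K.starProjection (b i)‖ ^ 2 = finrank 𝕜 K := by
  have hproj : LinearMap.IsProj K (K.starProjection : E →ₗ[𝕜] E) :=
    ⟨K.starProjection_apply_mem, fun _ => starProjection_eq_self_iff.mpr⟩
  have htrace := hproj.trace
  rw [LinearMap.trace_eq_sum_inner _ b] at htrace
  have hinner (i : ι) :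
      inner 𝕜 (b i) (K.starProjection (b i)) = ((‖K.starProjection (b i)‖ ^ 2 : ℝ) : 𝕜) := by
    have hidem : K.starProjection (K.starProjection (b i)) = K.starProjection (b i) :=
      starProjection_eq_self_iff.mpr (K.starProjection_apply_mem _)
    rw [← hidem, ← inner_starProjection_left_eq_right, hidem, inner_self_eq_norm_sq_to_K]
    push_cast; rfl
  simp only [ContinuousLinearMap.coe_coe, hinner] at htrace
  exact_mod_cast htrace

end Submodule

section Frobenius

variable {m n : Type*} [Fintype m] [Fintype n]

theorem Matrix.frobenius_norm_sq_eq_sum_row (A : Matrix m n ℝ) :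
    ‖A‖ ^ 2 = ∑ i, ‖toLp 2 (A i)‖ ^ 2 := by
  change ‖toLp 2 fun i => toLp 2 (A i)‖ ^ 2 = _
  rw [PiLp.norm_sq_eq_of_L2]

theorem Matrix.frobenius_norm_sq_eq_trace_s12 (A : Matrix m n ℝ) : ‖A‖ ^ 2 = trace (Aᵀ * A) := by
  simp only [frobenius_norm_sq_eq_sum_row, EuclideanSpace.norm_sq_eq,
    Real.norm_eq_abs, sq_abs, trace, diag_apply, mul_apply, transpose_apply, ← sq]
  exact Finset.sum_comm

theorem Matrix.frobenius_norm_mul_of_transpose_mul_self [DecidableEq m] {U : Matrix m m ℝ}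
    (hU : Uᵀ * U = 1) (A : Matrix m n ℝ) : ‖U * A‖ = ‖A‖ := by
  rw [← sq_eq_sq₀ (norm_nonneg _) (norm_nonneg _), frobenius_norm_sq_eq_trace_s12,
    frobenius_norm_sq_eq_trace_s12, transpose_mul, Matrix.mul_assoc, ← Matrix.mul_assoc Uᵀ, hU,
    Matrix.one_mul]

theorem Matrix.frobenius_norm_mul_transpose_of_transpose_mul_self [DecidableEq n]
    {Y : Matrix n n ℝ} (hY : Yᵀ * Y = 1) (A : Matrix m n ℝ) : ‖A * Yᵀ‖ = ‖A‖ := by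
  rw [← frobenius_norm_transpose, transpose_mul, transpose_transpose,
    frobenius_norm_mul_of_transpose_mul_self hY, frobenius_norm_transpose]

end Frobenius

def Matrix.euclideanRowSpace {m n : Type*} (C : Matrix m n ℝ) :
    Submodule ℝ (EuclideanSpace ℝ n) :=
  Submodule.span ℝ (Set.range fun i => toLp 2 (C i))

theorem Matrix.finrank_euclideanRowSpace {m n : Type*} [Finite m] [Fintype n]
    (C : Matrix m n ℝ) : finrank ℝ C.euclideanRowSpace = C.rank := by
  rw [rank_eq_finrank_span_row, euclideanRowSpace,
    ← LinearEquiv.finrank_map_eq (WithLp.linearEquiv 2 ℝ (n → ℝ)).symm, Submodule.map_span,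
    ← Set.range_comp]
  rfl

theorem Matrix.sum_norm_sq_sub_norm_starProjection_sq_le {m n : Type*} [Fintype m] [Fintype n]
    (A C : Matrix m n ℝ) :
    ∑ i, (‖toLp 2 (A i)‖ ^ 2 - ‖C.euclideanRowSpace.starProjection (toLp 2 (A i))‖ ^ 2) ≤
      ‖A - C‖ ^ 2 := by
  rw [frobenius_norm_sq_eq_sum_row]
  refine sum_le_sum fun i _ => ?_
  rw [show (A - C) i = A i - C i from rfl, WithLp.toLp_sub]
  exact C.euclideanRowSpace.norm_sq_sub_norm_starProjection_sq_le _
    (Submodule.subset_span (Set.mem_range_self i))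

section RectDiagonal

variable {n s : ℕ}

/- Rows are indexed by `Fin n` and columns by `Fin s`; indexing the diagonal and the standard basis
vectors by `ℕ`, with value `0` out of range, lets row `i` and column `j` share the index `t`. -/
def Matrix.rectDiag (S : Matrix (Fin n) (Fin s) ℝ) (t : ℕ) : ℝ :=
  if h : t < n ∧ t < s then S ⟨t, h.1⟩ ⟨t, h.2⟩ else 0

def EuclideanSpace.singleNat (s t : ℕ) : EuclideanSpace ℝ (Fin s) :=
  toLp 2 fun j => if (j : ℕ) = t then 1 else 0

theorem EuclideanSpace.singleNat_of_lt {t : ℕ} (h : t < s) :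
    singleNat s t = EuclideanSpace.single ⟨t, h⟩ 1 := by
  ext j
  simp [singleNat, Fin.ext_iff]

theorem EuclideanSpace.singleNat_of_le {t : ℕ} (h : s ≤ t) : singleNat s t = 0 := by
  ext j
  simp [singleNat, show (j : ℕ) ≠ t by omega]

theorem EuclideanSpace.norm_singleNat_le (t : ℕ) : ‖singleNat s t‖ ≤ 1 := by
  rcases lt_or_ge t s with h | h
  · simp [singleNat_of_lt h]
  · simp [singleNat_of_le h]

theorem EuclideanSpace.sum_range_norm_starProjection_singleNat_sq_le
    (K : Submodule ℝ (EuclideanSpace ℝ (Fin s))) (m : ℕ) :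
    ∑ t ∈ range m, ‖K.starProjection (singleNat s t)‖ ^ 2 ≤ finrank ℝ K := by
  have hzero : ∀ t ∈ range m, ‖K.starProjection (singleNat s t)‖ ^ 2 ≠ 0 → t < s := by
    intro t _ ht
    by_contra! hts
    simp [singleNat_of_le hts] at ht
  calc ∑ t ∈ range m, ‖K.starProjection (singleNat s t)‖ ^ 2
      = ∑ t ∈ range m with t < s, ‖K.starProjection (singleNat s t)‖ ^ 2 :=
        (sum_filter_of_ne hzero).symm
    _ ≤ ∑ t ∈ range s, ‖K.starProjection (singleNat s t)‖ ^ 2 :=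
        sum_le_sum_of_subset_of_nonneg (fun t ht => mem_range.mpr (mem_filter.mp ht).2)
          fun _ _ _ => sq_nonneg _
    _ = ∑ j, ‖K.starProjection (EuclideanSpace.basisFun (Fin s) ℝ j)‖ ^ 2 := by
        rw [← Fin.sum_univ_eq_sum_range (fun t => ‖K.starProjection (singleNat s t)‖ ^ 2)]
        simp [singleNat_of_lt]
    _ = finrank ℝ K := K.sum_norm_starProjection_sq_eq_finrank _

variable {S : Matrix (Fin n) (Fin s) ℝ}

theorem Matrix.toLp_row_eq_rectDiag_smul
    (hoff : ∀ (i : Fin n) (j : Fin s), (i : ℕ) ≠ (j : ℕ) → S i j = 0)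
    (i : Fin n) : toLp 2 (S i) = S.rectDiag i • EuclideanSpace.singleNat s i := by
  ext j
  by_cases hij : (j : ℕ) = i
  · have hi : (i : ℕ) < n ∧ (i : ℕ) < s := ⟨i.isLt, hij ▸ j.isLt⟩
    have hj : (⟨i, hi.2⟩ : Fin s) = j := Fin.ext hij.symm
    simp [rectDiag, EuclideanSpace.singleNat, hi, hij, hj]
  · simp [EuclideanSpace.singleNat, hij, hoff i j (Ne.symm hij)]

theorem Matrix.norm_toLp_row_sq (hoff : ∀ (i : Fin n) (j : Fin s), (i : ℕ) ≠ (j : ℕ) → S i j = 0)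
    (i : Fin n) : ‖toLp 2 (S i)‖ ^ 2 = S.rectDiag i ^ 2 := by
  rw [toLp_row_eq_rectDiag_smul hoff, norm_smul, mul_pow, Real.norm_eq_abs, sq_abs]
  by_cases hi : (i : ℕ) < s
  · simp [EuclideanSpace.singleNat_of_lt hi]
  · simp [rectDiag, hi]

theorem Matrix.rectDiag_nonneg
    (hnonneg : ∀ (i : Fin n) (j : Fin s), (i : ℕ) = (j : ℕ) → 0 ≤ S i j) (t : ℕ) :
    0 ≤ S.rectDiag t := by
  unfold rectDiag
  split_ifs
  exacts [hnonneg _ _ rfl, le_rfl]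

theorem Matrix.antitone_rectDiag
    (hnonneg : ∀ (i : Fin n) (j : Fin s), (i : ℕ) = (j : ℕ) → 0 ≤ S i j)
    (hmono : ∀ (i i' : Fin n) (j j' : Fin s), (i : ℕ) = (j : ℕ) → (i' : ℕ) = (j' : ℕ) →
      (i : ℕ) ≤ (i' : ℕ) → S i' j' ≤ S i j) :
    Antitone S.rectDiag := by
  intro a b hab
  by_cases hb : b < n ∧ b < s
  · have ha : a < n ∧ a < s := ⟨hab.trans_lt hb.1, hab.trans_lt hb.2⟩
    simp only [rectDiag, dif_pos ha, dif_pos hb]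
    exact hmono _ _ _ _ rfl rfl hab
  · simpa [rectDiag, hb] using rectDiag_nonneg hnonneg a

end RectDiagonal

section Truncation

variable {n s : ℕ} {S : Matrix (Fin n) (Fin s) ℝ} {r : ℕ}

theorem Matrix.sub_truncation_row
    (hoff : ∀ (i : Fin n) (j : Fin s), (i : ℕ) ≠ (j : ℕ) → S i j = 0) (i : Fin n) :
    (S - of fun (i : Fin n) (j : Fin s) => if (i : ℕ) = (j : ℕ) ∧ (i : ℕ) < r then S i j else 0) i
      = if (i : ℕ) < r then 0 else S i := by
  funext j
  by_cases hij : (i : ℕ) = j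
  · obtain ⟨j, hj⟩ := j
    subst hij
    by_cases hi : (i : ℕ) < r <;> simp [hi]
  · by_cases hi : (i : ℕ) < r <;> simp [hij, hi, hoff i j hij]

theorem Matrix.frobenius_norm_sub_truncation_sq
    (hoff : ∀ (i : Fin n) (j : Fin s), (i : ℕ) ≠ (j : ℕ) → S i j = 0) (hrn : r ≤ n) :
    ‖S - of fun (i : Fin n) (j : Fin s) => if (i : ℕ) = (j : ℕ) ∧ (i : ℕ) < r then S i j else 0‖ ^ 2
      = ∑ t ∈ Ico r n, S.rectDiag t ^ 2 := by
  have hrow (i : Fin n) : ‖toLp 2 (if (i : ℕ) < r then 0 else S i)‖ ^ 2 =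
      if (i : ℕ) < r then 0 else S.rectDiag i ^ 2 := by
    split_ifs
    · simp
    · exact norm_toLp_row_sq hoff i
  rw [frobenius_norm_sq_eq_sum_row]
  simp only [sub_truncation_row hoff, hrow]
  rw [Fin.sum_univ_eq_sum_range (fun t => if t < r then 0 else S.rectDiag t ^ 2),
    ← sum_range_add_sum_Ico _ hrn, sum_eq_zero fun t ht => if_pos (mem_range.mp ht), zero_add]
  exact sum_congr rfl fun t ht => if_neg (mem_Ico.mp ht).1.not_gt

theorem Matrix.sum_Ico_rectDiag_sq_le_frobenius_norm_sub_sq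
    (hoff : ∀ (i : Fin n) (j : Fin s), (i : ℕ) ≠ (j : ℕ) → S i j = 0)
    (hnonneg : ∀ (i : Fin n) (j : Fin s), (i : ℕ) = (j : ℕ) → 0 ≤ S i j)
    (hmono : ∀ (i i' : Fin n) (j j' : Fin s), (i : ℕ) = (j : ℕ) → (i' : ℕ) = (j' : ℕ) →
      (i : ℕ) ≤ (i' : ℕ) → S i' j' ≤ S i j)
    (hrn : r ≤ n) {C : Matrix (Fin n) (Fin s) ℝ} (hC : C.rank ≤ r) :
    ∑ t ∈ Ico r n, S.rectDiag t ^ 2 ≤ ‖S - C‖ ^ 2 := by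
  set K := C.euclideanRowSpace
  set p : ℕ → ℝ := fun t => ‖K.starProjection (EuclideanSpace.singleNat s t)‖ ^ 2
  have hrow : ∀ i : Fin n, ‖toLp 2 (S i)‖ ^ 2 - ‖K.starProjection (toLp 2 (S i))‖ ^ 2 =
      S.rectDiag i ^ 2 - S.rectDiag i ^ 2 * p i := by
    intro i
    rw [norm_toLp_row_sq hoff, toLp_row_eq_rectDiag_smul hoff, map_smul, norm_smul, mul_pow,
      Real.norm_eq_abs, sq_abs]
  have hp : ∑ t ∈ range n, p t ≤ r :=
    (EuclideanSpace.sum_range_norm_starProjection_singleNat_sq_le K n).trans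
      (by rw [finrank_euclideanRowSpace]; exact_mod_cast hC)
  have hσ_anti := antitone_rectDiag hnonneg hmono
  have hweighted := sum_range_mul_le_sum_range_of_antitone hrn
    (fun a b hab => pow_le_pow_left₀ (rectDiag_nonneg hnonneg b) (hσ_anti hab) 2) (sq_nonneg _)
    (fun _ => sq_nonneg _)
    (fun t => pow_le_one₀ (norm_nonneg _) ((K.norm_starProjection_apply_le _).trans
      (EuclideanSpace.norm_singleNat_le t))) hp
  calc ∑ t ∈ Ico r n, S.rectDiag t ^ 2
      = ∑ t ∈ range n, S.rectDiag t ^ 2 - ∑ t ∈ range r, S.rectDiag t ^ 2 := by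
        rw [← sum_range_add_sum_Ico _ hrn, add_sub_cancel_left]
    _ ≤ ∑ t ∈ range n, S.rectDiag t ^ 2 - ∑ t ∈ range n, S.rectDiag t ^ 2 * p t := by
        linarith
    _ = ∑ i : Fin n, (‖toLp 2 (S i)‖ ^ 2 - ‖K.starProjection (toLp 2 (S i))‖ ^ 2) := by
        simp_rw [hrow]
        rw [Fin.sum_univ_eq_sum_range (fun t => S.rectDiag t ^ 2 - S.rectDiag t ^ 2 * p t),
          sum_sub_distrib]
    _ ≤ ‖S - C‖ ^ 2 := sum_norm_sq_sub_norm_starProjection_sq_le S C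

end Truncation

/-- **Eckart–Young theorem (Frobenius norm).** Let `V = U_f · S · Y_fᵀ` be an SVD of the
`n × s` real matrix `V` (so `U_f`, `Y_f` orthogonal, `S` with zero off-diagonal entries and
nonincreasing nonnegative diagonal entries). For `r ≤ min n s`, let `V_r = U_f · S_r · Y_fᵀ`
where `S_r` agrees with `S` in its first `r` diagonal entries and vanishes elsewhere. Then for
every `n × s` real matrix `B` of rank at most `r`, `‖V − V_r‖_F ≤ ‖V − B‖_F`. -/
theorem truncated_svd_optimal_frobenius {n s : ℕ}
    (V : Matrix (Fin n) (Fin s) ℝ)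
    (Uf : Matrix (Fin n) (Fin n) ℝ) (Yf : Matrix (Fin s) (Fin s) ℝ)
    (S : Matrix (Fin n) (Fin s) ℝ)
    (hUf : Ufᵀ * Uf = 1) (hYf : Yfᵀ * Yf = 1)
    (hSVD : V = Uf * S * Yfᵀ)
    (hoff : ∀ (i : Fin n) (j : Fin s), (i : ℕ) ≠ (j : ℕ) → S i j = 0)
    (hnonneg : ∀ (i : Fin n) (j : Fin s), (i : ℕ) = (j : ℕ) → 0 ≤ S i j)
    (hmono : ∀ (i i' : Fin n) (j j' : Fin s), (i : ℕ) = (j : ℕ) → (i' : ℕ) = (j' : ℕ) →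
      (i : ℕ) ≤ (i' : ℕ) → S i' j' ≤ S i j)
    (r : ℕ) (hr : r ≤ min n s)
    (Sr : Matrix (Fin n) (Fin s) ℝ)
    (hSr : Sr = Matrix.of fun (i : Fin n) (j : Fin s) =>
      if (i : ℕ) = (j : ℕ) ∧ (i : ℕ) < r then S i j else 0)
    (Vr : Matrix (Fin n) (Fin s) ℝ) (hVr : Vr = Uf * Sr * Yfᵀ) :
    ∀ B : Matrix (Fin n) (Fin s) ℝ, B.rank ≤ r → ‖V - Vr‖ ≤ ‖V - B‖ := by
  intro B hB
  have hrn : r ≤ n := hr.trans (min_le_left n s)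
  have hVVr : V - Vr = Uf * (S - Sr) * Yfᵀ := by rw [hSVD, hVr, Matrix.mul_sub, Matrix.sub_mul]
  have hB_conj : Uf * (Ufᵀ * B * Yf) * Yfᵀ = B := by
    rw [← Matrix.mul_assoc, ← Matrix.mul_assoc, mul_eq_one_comm.mp hUf, Matrix.one_mul,
      Matrix.mul_assoc, mul_eq_one_comm.mp hYf, Matrix.mul_one]
  have hVB : V - B = Uf * (S - Ufᵀ * B * Yf) * Yfᵀ := by
    rw [Matrix.mul_sub, Matrix.sub_mul, hB_conj, hSVD]
  have hrank : (Ufᵀ * B * Yf).rank ≤ r :=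
    ((rank_mul_le_left _ _).trans (rank_mul_le_right _ _)).trans hB
  rw [hVVr, hVB, frobenius_norm_mul_transpose_of_transpose_mul_self hYf,
    frobenius_norm_mul_of_transpose_mul_self hUf,
    frobenius_norm_mul_transpose_of_transpose_mul_self hYf,
    frobenius_norm_mul_of_transpose_mul_self hUf, ← sq_le_sq₀ (norm_nonneg _) (norm_nonneg _),
    hSr, frobenius_norm_sub_truncation_sq hoff hrn]
  exact sum_Ico_rectDiag_sq_le_frobenius_norm_sub_sq hoff hnonneg hmono hrn hrank
end

section
/- Let V be an n×s real matrix with singular value decomposition V = U_f·Σ·Y_fᵀ, where U_f is an n×n orthogonal matrix, Y_f is an s×s orthogonal matrix, and Σ is an n×s matrix whose off-diagonal entries vanish and whose diagonal entries σ₁ ≥ σ₂ ≥ … ≥ 0 are nonincreasing and nonnegative. Fix r < min(n,s). Then σ_{r+1} is the minimal error achievable by any rank-r approximation in the spectral norm: for every n×s real matrix B with rank(B) ≤ r, ‖V − B‖₂ ≥ σ_{r+1}. -/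
open Matrix
open scoped Matrix.Norms.L2Operator

/-!
Let `W` and `U` be the first `r + 1` columns of `Y_f` and `U_f`; both have orthonormal columns and
`V W = U · diag(σ₁, …, σ_{r+1})`. As `rank (B W) ≤ r < r + 1`, some `c ≠ 0` has `B W c = 0`, so
`‖(V - B) W c‖ = ‖diag(σ) c‖ ≥ σ_{r+1} ‖c‖ = σ_{r+1} ‖W c‖`.
-/

open WithLp

namespace Matrix

variable {m n : Type*} [Fintype n]

theorem exists_mulVec_eq_zero_of_rank_lt {K : Type*} [Field K] (A : Matrix m n K)
    (h : A.rank < Fintype.card n) : ∃ v ≠ 0, A *ᵥ v = 0 := by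
  classical
  by_contra! hinj
  have : Function.Injective A.mulVecLin := by
    rw [← LinearMap.ker_eq_bot, Submodule.eq_bot_iff]
    exact fun v hv => by_contra fun hv0 => hinj v hv0 hv
  have := LinearMap.finrank_range_of_inj this
  simp only [Module.finrank_fintype_fun_eq_card] at this
  exact h.ne (by rw [rank, this])

variable [DecidableEq n]

theorem mul_norm_le_norm_diagonal_mulVec {d x : n → ℝ} {a : ℝ}
    (hd : ∀ i, a ≤ |d i|) : a * ‖toLp 2 x‖ ≤ ‖toLp 2 (diagonal d *ᵥ x)‖ := by
  rcases le_or_gt a 0 with ha | ha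
  · exact (mul_nonpos_of_nonpos_of_nonneg ha (norm_nonneg _)).trans (norm_nonneg _)
  rw [EuclideanSpace.norm_eq, EuclideanSpace.norm_eq, ← Real.sqrt_sq ha.le,
    ← Real.sqrt_mul (sq_nonneg a), Finset.mul_sum]
  refine Real.sqrt_le_sqrt (Finset.sum_le_sum fun i _ => ?_)
  simp only [mulVec_diagonal, Real.norm_eq_abs, ← mul_pow, abs_mul]
  gcongr
  exact hd i

theorem mul_one_submatrix_id {R : Type*} [NonAssocSemiring R] {l : Type*}
    (M : Matrix m n R) (e : l → n) : M * (1 : Matrix n n R).submatrix id e = M.submatrix id e := by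
  simpa using mul_submatrix_one (Equiv.refl n) e M

theorem transpose_one_submatrix_mul_self {R : Type*} [NonAssocSemiring R]
    {l : Type*} [DecidableEq l] {e : l → n} (he : Function.Injective e) :
    ((1 : Matrix n n R).submatrix id e)ᵀ * (1 : Matrix n n R).submatrix id e = 1 := by
  rw [transpose_submatrix, transpose_one, mul_one_submatrix_id, submatrix_submatrix]
  exact submatrix_one e he

variable [Fintype m]

theorem norm_toLp_mulVec_of_transpose_mul_self {Q : Matrix m n ℝ}
    (hQ : Qᵀ * Q = 1) (x : n → ℝ) : ‖toLp 2 (Q *ᵥ x)‖ = ‖toLp 2 x‖ := by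
  refine (sq_eq_sq₀ (norm_nonneg _) (norm_nonneg _)).mp ?_
  simp only [← real_inner_self_eq_norm_sq, EuclideanSpace.inner_toLp_toLp, star_trivial]
  rw [dotProduct_mulVec, ← vecMul_transpose, vecMul_vecMul, hQ, vecMul_one]

theorem le_l2_opNorm_of_mul_norm_le {𝕜 : Type*} [RCLike 𝕜] {A : Matrix m n 𝕜}
    {x : n → 𝕜} (hx : x ≠ 0) {a : ℝ} (h : a * ‖toLp 2 x‖ ≤ ‖toLp 2 (A *ᵥ x)‖) : a ≤ ‖A‖ :=
  le_of_mul_le_mul_right (h.trans (l2_opNorm_mulVec A (toLp 2 x)))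
    (norm_pos_iff.mpr ((WithLp.toLp_eq_zero 2).not.mpr hx))

theorem transpose_mul_self_mul_of_transpose_mul_self {R : Type*} [CommSemiring R] {l : Type*}
    [Fintype l] [DecidableEq l] {Q : Matrix m n R} {P : Matrix n l R}
    (hQ : Qᵀ * Q = 1) (hP : Pᵀ * P = 1) : (Q * P)ᵀ * (Q * P) = 1 := by
  rw [transpose_mul, Matrix.mul_assoc, ← Matrix.mul_assoc Qᵀ, hQ, Matrix.one_mul, hP]

theorem mul_one_submatrix_castLE_of_offDiag_eq_zero {R : Type*} [NonAssocSemiring R] {a b k : ℕ}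
    {S : Matrix (Fin a) (Fin b) R} (hS : ∀ (i : Fin a) (j : Fin b), (i : ℕ) ≠ j → S i j = 0)
    (ha : k ≤ a) (hb : k ≤ b) :
    S * (1 : Matrix (Fin b) (Fin b) R).submatrix id (Fin.castLE hb) =
      (1 : Matrix (Fin a) (Fin a) R).submatrix id (Fin.castLE ha) *
        diagonal fun i => S (Fin.castLE ha i) (Fin.castLE hb i) := by
  ext i j
  rw [mul_one_submatrix_id, mul_diagonal, submatrix_apply, submatrix_apply, id, one_apply]
  by_cases hij : i = Fin.castLE ha j
  · simp [hij]
  · rw [if_neg hij, zero_mul]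
    exact hS _ _ fun h => hij (Fin.ext h)

end Matrix

/-- **Eckart–Young lower bound (spectral norm).** Let `V = U_f · S · Y_fᵀ` be an SVD of the
`n × s` real matrix `V` (so `U_f`, `Y_f` orthogonal, `S` with zero off-diagonal entries and
nonincreasing nonnegative diagonal entries `σ₁ ≥ σ₂ ≥ … ≥ 0`). Fix `r < min n s`. Then for
every `n × s` real matrix `B` of rank at most `r`, `‖V − B‖₂ ≥ σ_{r+1}` (zero-indexed: the
diagonal entry of `S` in position `r`). -/
theorem spectral_norm_rank_r_approx_lower_bound {n s : ℕ}
    (V : Matrix (Fin n) (Fin s) ℝ)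
    (Uf : Matrix (Fin n) (Fin n) ℝ) (Yf : Matrix (Fin s) (Fin s) ℝ)
    (S : Matrix (Fin n) (Fin s) ℝ)
    (hUf : Ufᵀ * Uf = 1) (hYf : Yfᵀ * Yf = 1)
    (hSVD : V = Uf * S * Yfᵀ)
    (hoff : ∀ (i : Fin n) (j : Fin s), (i : ℕ) ≠ (j : ℕ) → S i j = 0)
    (hmono : ∀ (i i' : Fin n) (j j' : Fin s), (i : ℕ) = (j : ℕ) → (i' : ℕ) = (j' : ℕ) →
      (i : ℕ) ≤ (i' : ℕ) → S i' j' ≤ S i j)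
    (r : ℕ) (hr : r < min n s) :
    ∀ B : Matrix (Fin n) (Fin s) ℝ, B.rank ≤ r →
      S ⟨r, by omega⟩ ⟨r, by omega⟩ ≤ ‖V - B‖ := by
  intro B hB
  have hrn : r + 1 ≤ n := by omega
  have hrs : r + 1 ≤ s := by omega
  set d : Fin (r + 1) → ℝ := fun k => S (Fin.castLE hrn k) (Fin.castLE hrs k)
  set W := Yf * (1 : Matrix (Fin s) (Fin s) ℝ).submatrix id (Fin.castLE hrs)
  set U := Uf * (1 : Matrix (Fin n) (Fin n) ℝ).submatrix id (Fin.castLE hrn)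
  have hW : Wᵀ * W = 1 := transpose_mul_self_mul_of_transpose_mul_self hYf
    (transpose_one_submatrix_mul_self (Fin.castLE_injective hrs))
  have hU : Uᵀ * U = 1 := transpose_mul_self_mul_of_transpose_mul_self hUf
    (transpose_one_submatrix_mul_self (Fin.castLE_injective hrn))
  have hVW : V * W = U * diagonal d := by
    rw [hSVD, Matrix.mul_assoc, ← Matrix.mul_assoc Yfᵀ, hYf, Matrix.one_mul, Matrix.mul_assoc,
      mul_one_submatrix_castLE_of_offDiag_eq_zero hoff hrn hrs, Matrix.mul_assoc]
  obtain ⟨c, hc, hBWc⟩ := (B * W).exists_mulVec_eq_zero_of_rank_lt <|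
    (rank_mul_le_left B W).trans_lt <| by rw [Fintype.card_fin]; omega
  have hWc : W *ᵥ c ≠ 0 := fun h => hc <| by
    simpa [h] using (norm_toLp_mulVec_of_transpose_mul_self hW c).symm
  refine le_l2_opNorm_of_mul_norm_le hWc ?_
  calc S ⟨r, _⟩ ⟨r, _⟩ * ‖toLp 2 (W *ᵥ c)‖ = S ⟨r, _⟩ ⟨r, _⟩ * ‖toLp 2 c‖ := by
        rw [norm_toLp_mulVec_of_transpose_mul_self hW]
    _ ≤ ‖toLp 2 (diagonal d *ᵥ c)‖ := mul_norm_le_norm_diagonal_mulVec fun k =>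
        (hmono _ _ _ _ rfl rfl k.is_le).trans (le_abs_self _)
    _ = ‖toLp 2 ((V - B) *ᵥ (W *ᵥ c))‖ := by
        rw [mulVec_mulVec, Matrix.sub_mul, sub_mulVec, hVW, hBWc, sub_zero,
          ← mulVec_mulVec, norm_toLp_mulVec_of_transpose_mul_self hU]
end
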